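/- arXiv:2105.06764 — 2 statements merged into one kernel-verified Lean document; each statement's English description precedes it below -/
import Mathlib

section
/- Let n ≥ 2 be an integer and T a nonempty subset of [n−1]. If there exist i, j ∈ T (possibly i = j) with i + j = n, then the graph Γ(n,T) is bipartite and its independence number equals half the number of its vertices: α(Γ(n,T)) = |VΓ(n,T)|/2. -/
open Finset

/-- `Iv n` is the set `[n] = {1, …, n}` as a finset of naturals (with `Iv 0 = ∅`). -/
def Iv (n : ℕ) : Finset ℕ := Finset.Icc 1 n

/-- `f` is a flag of the ground set `[n]`: a set of nonempty proper subsets of `[n]`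
that is totally ordered by inclusion. -/
def IsFlag (n : ℕ) (f : Finset (Finset ℕ)) : Prop :=
  (∀ A ∈ f, A.Nonempty ∧ A ⊆ Iv n ∧ A ≠ Iv n) ∧
  ∀ A ∈ f, ∀ B ∈ f, A ⊆ B ∨ B ⊆ A

/-- The type of a flag: the set of cardinalities of its members. -/
def flagType (f : Finset (Finset ℕ)) : Finset ℕ := f.image Finset.card

/-- The vertices of `Γ(n, T)`: flags of `[n]` of type `T`. -/
def FlagV (n : ℕ) (T : Finset ℕ) : Type :=
  {f : Finset (Finset ℕ) // IsFlag n f ∧ flagType f = T}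

/-- Two flags of `[n]` are in general position. -/
def GenPos (n : ℕ) (f g : Finset (Finset ℕ)) : Prop :=
  ∀ A ∈ f, ∀ B ∈ g, A ∩ B = ∅ ∨ A ∪ B = Iv n

/-- The graph `Γ(n, T)` on the flags of `[n]` of type `T`, two distinct flags being
adjacent iff they are in general position. -/
def flagGraph (n : ℕ) (T : Finset ℕ) : SimpleGraph (FlagV n T) where
  Adj f g := f ≠ g ∧ GenPos n f.1 g.1
  symm := ⟨by
    rintro f g ⟨hne, h⟩
    refine ⟨hne.symm, fun A hA B hB => ?_⟩
    rcases h B hB A hA with h' | h'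
    · exact Or.inl (by rwa [Finset.inter_comm])
    · exact Or.inr (by rwa [Finset.union_comm])⟩
  loopless := ⟨fun f h => h.1 rfl⟩

/-- A set of vertices is independent: pairwise nonadjacent. -/
def IsIndep {V : Type*} (G : SimpleGraph V) (s : Set V) : Prop :=
  ∀ ⦃u⦄, u ∈ s → ∀ ⦃v⦄, v ∈ s → ¬ G.Adj u v

/-- A maximal independent set: independent, and no vertex can be added to it
keeping it independent. -/
def IsMaxIndep {V : Type*} (G : SimpleGraph V) (s : Set V) : Prop :=
  IsIndep G s ∧ ∀ v ∉ s, ¬ IsIndep G (insert v s)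

/-- The independence number of a graph: the largest cardinality of an independent set. -/
noncomputable def indepNum {V : Type*} (G : SimpleGraph V) : ℕ :=
  sSup {k | ∃ s : Set V, IsIndep G s ∧ s.ncard = k}

/-- Two sets of vertices are equivalent when some automorphism of the graph maps
one onto the other. -/
def EquivIndep {V : Type*} (G : SimpleGraph V) (s t : Set V) : Prop :=
  ∃ φ : G ≃g G, ⇑φ '' s = t

/-- The projection of a flag to the sub-type `S`: keep only the members whose
cardinality lies in `S`. -/
def projFlag (S : Finset ℕ) (f : Finset (Finset ℕ)) : Finset (Finset ℕ) :=
  f.filter (fun A => A.card ∈ S)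

/-- Condition (I) of Example 3.1: `[i] ⊆ B ⊆ [n-1]`. -/
def condI (n i : ℕ) (B : Finset ℕ) : Prop := Iv i ⊆ B ∧ B ⊆ Iv (n - 1)

/-- Condition (II) of Example 3.1: `min A ≤ i` and `[min A] ⊆ B`. -/
def condII (i : ℕ) (A B : Finset ℕ) : Prop :=
  ∃ j ∈ A, (∀ k ∈ A, j ≤ k) ∧ j ≤ i ∧ Iv j ⊆ B

/-- The set `F_i(n,a,b)` of flags `(A,B)` of `[n]` of type `{a,b}` satisfying
condition (I) or condition (II). -/
def Fi (n a b i : ℕ) : Set (FlagV n {a, b}) :=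
  {f | ∃ A B : Finset ℕ, A ∈ f.1 ∧ B ∈ f.1 ∧ A.card = a ∧ B.card = b ∧
        (condI n i B ∨ condII i A B)}

/-- The set `bar F_i(n,a,b)` for `i = 2b-n+1`: flags `(A,B)` of type `{a,b}` with
`[i] ⊆ B` or condition (II). -/
def FiBar (n a b : ℕ) : Set (FlagV n {a, b}) :=
  {f | ∃ A B : Finset ℕ, A ∈ f.1 ∧ B ∈ f.1 ∧ A.card = a ∧ B.card = b ∧
        (Iv (2 * b - n + 1) ⊆ B ∨ condII (2 * b - n + 1) A B)}

/-- The rational number `i₀ = b - 1 - (n-b)(n-b-1)/a`. -/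
def izero (n a b : ℕ) : ℚ :=
  (b : ℚ) - 1 - ((n : ℚ) - b) * ((n : ℚ) - b - 1) / a

/-- The index `i = max{0, ⌈i₀⌉}`. -/
def iDef (n a b : ℕ) : ℕ := (max 0 ⌈izero n a b⌉).toNat

/-- `f(n,a,b)`: the largest cardinality of the sets `F_j(n,a,b)`, `0 ≤ j ≤ 2b-n+1`. -/
noncomputable def fMax (n a b : ℕ) : ℕ :=
  (Finset.range (2 * b - n + 2)).sup (fun j => (Fi n a b j).ncard)

/-- An independent set of `Γ(n,{a,b})` is of standard type if it has cardinality
`f(n,a,b)` and some automorphism of the graph maps it onto one of the sets of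
Example 3.1. -/
noncomputable def IsStandardType (n a b : ℕ) (F : Set (FlagV n {a, b})) : Prop :=
  F.ncard = fMax n a b ∧
  ∃ φ : flagGraph n {a, b} ≃g flagGraph n {a, b},
    (∃ j ≤ 2 * b - n + 1, ⇑φ '' F = Fi n a b j) ∨ ⇑φ '' F = FiBar n a b

namespace BQ

open scoped Classical

variable {n : ℕ} {f f' g h : Finset (Finset ℕ)} {A B : Finset ℕ} {T U : Finset ℕ}

lemma card_Iv (n : ℕ) : (Iv n).card = n := by simp [Iv]

lemma mem_Iv {x n : ℕ} : x ∈ Iv n ↔ 1 ≤ x ∧ x ≤ n := by simp [Iv]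

variable {n : ℕ} {f g h : Finset (Finset ℕ)} {A B : Finset ℕ}

lemma flag_card_lt (hf : IsFlag n f) (hA : A ∈ f) : A.card < n := by
  obtain ⟨-, hsub, hne⟩ := hf.1 A hA
  have := Finset.card_lt_card (lt_of_le_of_ne hsub hne)
  simpa [card_Iv] using this

lemma flag_card_pos (hf : IsFlag n f) (hA : A ∈ f) : 0 < A.card :=
  Finset.card_pos.2 (hf.1 A hA).1

lemma flag_subset_iff (hf : IsFlag n f) (hA : A ∈ f) (hB : B ∈ f) :
    A ⊆ B ↔ A.card ≤ B.card := by
  constructor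
  · exact Finset.card_le_card
  · intro hc
    rcases hf.2 A hA B hB with h' | h'
    · exact h'
    · exact (Finset.eq_of_subset_of_card_le h' hc) ▸ Finset.Subset.refl _

lemma flag_eq_of_card (hf : IsFlag n f) (hA : A ∈ f) (hB : B ∈ f)
    (hc : A.card = B.card) : A = B :=
  Finset.Subset.antisymm ((flag_subset_iff hf hA hB).2 hc.le)
    ((flag_subset_iff hf hB hA).2 hc.ge)

lemma exists_card_mem {T : Finset ℕ} (hft : flagType f = T) {t : ℕ} (ht : t ∈ T) :
    ∃ A ∈ f, A.card = t := by
  rw [← hft] at ht; simpa [flagType] using ht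

lemma flag_card_injOn (hf : IsFlag n f) :
    Set.InjOn Finset.card (f : Set (Finset ℕ)) := fun A hA B hB hc => flag_eq_of_card hf hA hB hc

lemma flag_card_type {T : Finset ℕ} (hf : IsFlag n f) (hft : flagType f = T) :
    f.card = T.card := by
  rw [← hft, flagType, Finset.card_image_of_injOn (flag_card_injOn hf)]


noncomputable def phi (f : Finset (Finset ℕ)) (x : ℕ) : ℕ :=
  (f.filter (fun A => x ∈ A)).card

noncomputable def cntT (T : Finset ℕ) (a : ℕ) : ℕ :=
  (T.filter (fun t => a ≤ t)).card

lemma cnt_eq_cntT (hf : IsFlag n f) (hft : flagType f = T) (hA : A ∈ f) :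
    (f.filter (fun B => A ⊆ B)).card = cntT T A.card := by
  have h1 : f.filter (fun B => A ⊆ B) = f.filter (fun B => A.card ≤ B.card) := by
    apply Finset.filter_congr
    intro B hB
    exact flag_subset_iff hf hA hB
  rw [h1, cntT, ← hft, flagType, Finset.filter_image]
  rw [Finset.card_image_of_injOn]
  intro X hX Y hY hc
  exact flag_eq_of_card hf (Finset.mem_filter.1 hX).1 (Finset.mem_filter.1 hY).1 hc

lemma mem_iff_cnt (hf : IsFlag n f) (hft : flagType f = T) (hA : A ∈ f) (x : ℕ) :
    x ∈ A ↔ cntT T A.card ≤ phi f x := by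
  rw [← cnt_eq_cntT hf hft hA]
  constructor
  · intro hx
    apply Finset.card_le_card
    intro B hB
    rw [Finset.mem_filter] at hB ⊢
    exact ⟨hB.1, hB.2 hx⟩
  · intro hle
    by_contra hx
    have hsub : f.filter (fun B => x ∈ B) ⊆ f.filter (fun B => A ⊆ B) := by
      intro B hB
      rw [Finset.mem_filter] at hB ⊢
      refine ⟨hB.1, ?_⟩
      rcases hf.2 A hA B hB.1 with h' | h'
      · exact h'
      · exact absurd (h' hB.2) hx
    have hss : f.filter (fun B => x ∈ B) ⊂ f.filter (fun B => A ⊆ B) := by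
      refine ⟨hsub, fun hcon => ?_⟩
      have : A ∈ f.filter (fun B => A ⊆ B) := Finset.mem_filter.2 ⟨hA, Finset.Subset.refl _⟩
      exact hx (Finset.mem_filter.1 (hcon this)).2
    have := Finset.card_lt_card hss
    unfold phi at hle
    omega

lemma member_eq_filter (hf : IsFlag n f) (hft : flagType f = T) (hA : A ∈ f) :
    A = (Iv n).filter (fun x => cntT T A.card ≤ phi f x) := by
  ext x
  rw [Finset.mem_filter, ← mem_iff_cnt hf hft hA]
  exact ⟨fun hx => ⟨(hf.1 A hA).2.1 hx, hx⟩, fun hx => hx.2⟩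

lemma phi_le (hf : IsFlag n f) (hft : flagType f = T) (x : ℕ) : phi f x ≤ T.card := by
  rw [← flag_card_type hf hft]
  exact Finset.card_le_card (Finset.filter_subset _ _)

lemma cntT_strict {t t' : ℕ} (ht : t ∈ T) (hlt : t < t') :
    cntT T t' < cntT T t := by
  apply Finset.card_lt_card
  refine ⟨fun u hu => ?_, fun hcon => ?_⟩
  · rw [Finset.mem_filter] at hu ⊢
    exact ⟨hu.1, by omega⟩
  have h1 : t ∈ T.filter (fun u => t ≤ u) := Finset.mem_filter.2 ⟨ht, le_refl t⟩
  have := (Finset.mem_filter.1 (hcon h1)).2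
  omega

lemma cntT_surj {v : ℕ} (hv1 : 1 ≤ v) (hv2 : v ≤ T.card) :
    ∃ t ∈ T, cntT T t = v := by
  have himsub : T.image (cntT T) ⊆ Finset.Icc 1 T.card := by
    intro c hc
    obtain ⟨t, ht, rfl⟩ := Finset.mem_image.1 hc
    rw [Finset.mem_Icc]
    constructor
    · have h1 : t ∈ T.filter (fun u => t ≤ u) := Finset.mem_filter.2 ⟨ht, le_refl t⟩
      exact Finset.card_pos.2 ⟨t, h1⟩
    · exact Finset.card_le_card (Finset.filter_subset _ _)
  have hinj : Set.InjOn (cntT T) (T : Set ℕ) := by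
    intro t ht t' ht' hc
    by_contra hne
    rcases Nat.lt_or_ge t t' with hlt | hge
    · have := cntT_strict ht hlt; omega
    · have hlt : t' < t := by omega
      have := cntT_strict ht' hlt; omega
  have hcard : (T.image (cntT T)).card = T.card := Finset.card_image_of_injOn hinj
  have him : T.image (cntT T) = Finset.Icc 1 T.card := by
    apply Finset.eq_of_subset_of_card_le himsub
    rw [hcard]; simp
  have : v ∈ T.image (cntT T) := by
    rw [him, Finset.mem_Icc]; omega
  simpa using this


noncomputable def mapF (σ : ℕ → ℕ) (f : Finset (Finset ℕ)) : Finset (Finset ℕ) :=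
  f.image (fun A => A.image σ)

lemma levelset_card (hf : IsFlag n f) (hft : flagType f = T)
    (hf' : IsFlag n f') (hft' : flagType f' = T) (v : ℕ) :
    ((Iv n).filter (fun x => v ≤ phi f x)).card
      = ((Iv n).filter (fun x => v ≤ phi f' x)).card := by
  rcases Nat.eq_zero_or_pos v with rfl | hv1
  · simp
  rcases le_or_gt v T.card with hv2 | hv2
  · obtain ⟨t, ht, hcnt⟩ := cntT_surj hv1 hv2
    obtain ⟨A, hA, hAc⟩ := exists_card_mem hft ht
    obtain ⟨A', hA', hAc'⟩ := exists_card_mem hft' ht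
    have e1 : (Iv n).filter (fun x => v ≤ phi f x) = A := by
      rw [member_eq_filter hf hft hA, hAc, hcnt]
    have e2 : (Iv n).filter (fun x => v ≤ phi f' x) = A' := by
      rw [member_eq_filter hf' hft' hA', hAc', hcnt]
    rw [e1, e2, hAc, hAc']
  · have e1 : (Iv n).filter (fun x => v ≤ phi f x) = ∅ := by
      apply Finset.filter_false_of_mem
      intro x hx
      have := phi_le hf hft x; omega
    have e2 : (Iv n).filter (fun x => v ≤ phi f' x) = ∅ := by
      apply Finset.filter_false_of_mem
      intro x hx
      have := phi_le hf' hft' x; omega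
    rw [e1, e2]

lemma fiber_card (hf : IsFlag n f) (hft : flagType f = T)
    (hf' : IsFlag n f') (hft' : flagType f' = T) (v : ℕ) :
    ((Iv n).filter (fun x => phi f x = v)).card
      = ((Iv n).filter (fun x => phi f' x = v)).card := by
  have key : ∀ g : Finset (Finset ℕ),
      ((Iv n).filter (fun x => phi g x = v)).card
        = ((Iv n).filter (fun x => v ≤ phi g x)).card
          - ((Iv n).filter (fun x => v + 1 ≤ phi g x)).card := by
    intro g
    have hsub : (Iv n).filter (fun x => v + 1 ≤ phi g x)
        ⊆ (Iv n).filter (fun x => v ≤ phi g x) := by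
      intro x hx; rw [Finset.mem_filter] at hx ⊢; exact ⟨hx.1, by omega⟩
    have hdiff : (Iv n).filter (fun x => v ≤ phi g x) \
        (Iv n).filter (fun x => v + 1 ≤ phi g x)
        = (Iv n).filter (fun x => phi g x = v) := by
      ext x
      simp only [Finset.mem_sdiff, Finset.mem_filter]
      constructor
      · rintro ⟨⟨h1, h2⟩, h3⟩
        refine ⟨h1, ?_⟩
        by_contra hne
        exact h3 ⟨h1, by omega⟩
      · rintro ⟨h1, h2⟩
        exact ⟨⟨h1, by omega⟩, fun hcon => by omega⟩
    rw [← hdiff, Finset.card_sdiff_of_subset hsub]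
  rw [key f, key f', levelset_card hf hft hf' hft' v, levelset_card hf hft hf' hft' (v+1)]

/-- transport: a bijection of `Iv n` carrying `f` to `f'`. -/
lemma transport (hf : IsFlag n f) (hft : flagType f = T)
    (hf' : IsFlag n f') (hft' : flagType f' = T) :
    ∃ σ τ : ℕ → ℕ,
      (∀ x ∈ Iv n, σ x ∈ Iv n) ∧ (∀ x ∈ Iv n, τ x ∈ Iv n) ∧
      (∀ x ∈ Iv n, τ (σ x) = x) ∧ (∀ x ∈ Iv n, σ (τ x) = x) ∧
      (∀ x ∈ Iv n, phi f' (σ x) = phi f x) ∧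
      mapF σ f = f' := by
  set I := {x : ℕ // x ∈ Iv n}
  have hcard : ∀ v : ℕ,
      Fintype.card {x : I // phi f x.1 = v} = Fintype.card {x : I // phi f' x.1 = v} := by
    intro v
    have key : ∀ g : Finset (Finset ℕ), Fintype.card {x : I // phi g x.1 = v}
        = ((Iv n).filter (fun x => phi g x = v)).card := by
      intro g
      rw [Fintype.card_subtype]
      apply Finset.card_bij (fun (x : I) _ => x.1)
      · intro a ha
        simp only [Finset.mem_filter, Finset.mem_univ, true_and] at ha
        exact Finset.mem_filter.2 ⟨a.2, ha⟩
      · intro a ha b hb hab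
        exact Subtype.ext hab
      · intro b hb
        rw [Finset.mem_filter] at hb
        exact ⟨⟨b, hb.1⟩, by simp [hb.2], rfl⟩
    rw [key f, key f', fiber_card hf hft hf' hft' v]
  have e_v : ∀ v : ℕ, {x : I // phi f x.1 = v} ≃ {x : I // phi f' x.1 = v} :=
    fun v => Fintype.equivOfCardEq (hcard v)
  set e : I ≃ I :=
    ((Equiv.sigmaFiberEquiv (fun x : I => phi f x.1)).symm.trans
      ((Equiv.sigmaCongrRight e_v).trans
        (Equiv.sigmaFiberEquiv (fun x : I => phi f' x.1)))) with he
  have hephi : ∀ x : I, phi f' (e x).1 = phi f x.1 := by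
    intro x
    have : e x = (e_v (phi f x.1) ⟨x, rfl⟩).1 := rfl
    rw [this]
    exact (e_v (phi f x.1) ⟨x, rfl⟩).2
  set σ : ℕ → ℕ := fun x => if hx : x ∈ Iv n then (e ⟨x, hx⟩).1 else x with hσ
  set τ : ℕ → ℕ := fun x => if hx : x ∈ Iv n then (e.symm ⟨x, hx⟩).1 else x with hτ
  have hσI : ∀ x ∈ Iv n, σ x ∈ Iv n := by
    intro x hx; rw [hσ]; simp only [hx, dif_pos]; exact (e ⟨x, hx⟩).2
  have hτI : ∀ x ∈ Iv n, τ x ∈ Iv n := by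
    intro x hx; rw [hτ]; simp only [hx, dif_pos]; exact (e.symm ⟨x, hx⟩).2
  have hτσ : ∀ x ∈ Iv n, τ (σ x) = x := by
    intro x hx
    rw [hσ]; simp only [hx, dif_pos]
    rw [hτ]; simp only [(e ⟨x, hx⟩).2, dif_pos]
    have : (⟨(e ⟨x, hx⟩).1, (e ⟨x, hx⟩).2⟩ : I) = e ⟨x, hx⟩ := rfl
    rw [this, Equiv.symm_apply_apply]
  have hστ : ∀ x ∈ Iv n, σ (τ x) = x := by
    intro x hx
    rw [hτ]; simp only [hx, dif_pos]
    rw [hσ]; simp only [(e.symm ⟨x, hx⟩).2, dif_pos]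
    have : (⟨(e.symm ⟨x, hx⟩).1, (e.symm ⟨x, hx⟩).2⟩ : I) = e.symm ⟨x, hx⟩ := rfl
    rw [this, Equiv.apply_symm_apply]
  have hphi : ∀ x ∈ Iv n, phi f' (σ x) = phi f x := by
    intro x hx
    rw [hσ]; simp only [hx, dif_pos]
    exact hephi ⟨x, hx⟩
  -- image of a member is the corresponding member of f'
  have himg : ∀ A ∈ f, ∀ A' ∈ f', A.card = A'.card → A.image σ = A' := by
    intro A hA A' hA' hcc
    ext y
    simp only [Finset.mem_image]
    constructor
    · rintro ⟨x, hxA, rfl⟩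
      have hxI : x ∈ Iv n := (hf.1 A hA).2.1 hxA
      have h1 : cntT T A.card ≤ phi f x := (mem_iff_cnt hf hft hA x).1 hxA
      have h2 : cntT T A'.card ≤ phi f' (σ x) := by
        rw [hphi x hxI, ← hcc]; exact h1
      exact (mem_iff_cnt hf' hft' hA' (σ x)).2 h2
    · intro hy
      have hyI : y ∈ Iv n := (hf'.1 A' hA').2.1 hy
      refine ⟨τ y, ?_, hστ y hyI⟩
      have h1 : cntT T A'.card ≤ phi f' y := (mem_iff_cnt hf' hft' hA' y).1 hy
      have h2 : cntT T A.card ≤ phi f (τ y) := by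
        have := hphi (τ y) (hτI y hyI)
        rw [hστ y hyI] at this
        rw [hcc]; omega
      exact (mem_iff_cnt hf hft hA (τ y)).2 h2
  have hmap : mapF σ f = f' := by
    ext B
    simp only [mapF, Finset.mem_image]
    constructor
    · rintro ⟨A, hA, rfl⟩
      have : A.card ∈ T := by rw [← hft]; exact Finset.mem_image_of_mem _ hA
      obtain ⟨A', hA', hAc'⟩ := exists_card_mem hft' this
      rw [himg A hA A' hA' hAc'.symm]
      exact hA'
    · intro hB
      have : B.card ∈ T := by rw [← hft']; exact Finset.mem_image_of_mem _ hB
      obtain ⟨A, hA, hAc⟩ := exists_card_mem hft this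
      exact ⟨A, hA, himg A hA B hB hAc⟩
  exact ⟨σ, τ, hσI, hτI, hτσ, hστ, hphi, hmap⟩


def Compat (f g : Finset (Finset ℕ)) : Prop :=
  ∀ A ∈ f, ∀ B ∈ g, A ⊆ B ∨ B ⊆ A

noncomputable def cmpl (n : ℕ) (f : Finset (Finset ℕ)) : Finset (Finset ℕ) :=
  f.image (fun A => Iv n \ A)

section mapFlemmas

variable {σ τ : ℕ → ℕ}

lemma image_card_eq (hsub : A ⊆ Iv n) (hσI : ∀ x ∈ Iv n, σ x ∈ Iv n)
    (hτσ : ∀ x ∈ Iv n, τ (σ x) = x) : (A.image σ).card = A.card := by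
  apply Finset.card_image_of_injOn
  intro x hx y hy hxy
  have := hτσ x (hsub hx)
  have := hτσ y (hsub hy)
  rw [← hτσ x (hsub hx), ← hτσ y (hsub hy), hxy]

lemma mapF_isFlag (hσI : ∀ x ∈ Iv n, σ x ∈ Iv n) (hτσ : ∀ x ∈ Iv n, τ (σ x) = x)
    (hh : IsFlag n h) : IsFlag n (mapF σ h) := by
  constructor
  · intro D hD
    obtain ⟨C, hC, rfl⟩ := Finset.mem_image.1 hD
    obtain ⟨hne, hsub, hneq⟩ := hh.1 C hC
    refine ⟨hne.image σ, ?_, ?_⟩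
    · intro y hy
      obtain ⟨x, hx, rfl⟩ := Finset.mem_image.1 hy
      exact hσI x (hsub hx)
    · intro hcon
      have h1 : (C.image σ).card = C.card := image_card_eq hsub hσI hτσ
      have h2 : C.card < n := flag_card_lt hh hC
      rw [hcon, card_Iv] at h1
      omega
  · intro D hD D' hD'
    obtain ⟨C, hC, rfl⟩ := Finset.mem_image.1 hD
    obtain ⟨C', hC', rfl⟩ := Finset.mem_image.1 hD'
    rcases hh.2 C hC C' hC' with h' | h'
    · exact Or.inl (Finset.image_subset_image h')
    · exact Or.inr (Finset.image_subset_image h')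

lemma mapF_type (hσI : ∀ x ∈ Iv n, σ x ∈ Iv n) (hτσ : ∀ x ∈ Iv n, τ (σ x) = x)
    (hh : IsFlag n h) : flagType (mapF σ h) = flagType h := by
  unfold flagType mapF
  rw [Finset.image_image]
  apply Finset.image_congr
  intro C hC
  exact image_card_eq (hh.1 C hC).2.1 hσI hτσ

lemma mapF_mapF (hτσ : ∀ x ∈ Iv n, τ (σ x) = x)
    (hsub : ∀ C ∈ h, C ⊆ Iv n) : mapF τ (mapF σ h) = h := by
  unfold mapF
  rw [Finset.image_image]
  have key : ∀ C ∈ h, ((C.image σ).image τ) = C := by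
    intro C hC
    rw [Finset.image_image]
    ext y
    simp only [Finset.mem_image, Function.comp]
    constructor
    · rintro ⟨x, hx, rfl⟩
      rw [hτσ x (hsub C hC hx)]; exact hx
    · intro hy
      exact ⟨y, hy, hτσ y (hsub C hC hy)⟩
  have : h.image ((fun A => A.image τ) ∘ (fun A => A.image σ)) = h.image id := by
    apply Finset.image_congr
    intro C hC
    simp only [Function.comp, id]
    exact key C hC
  rw [this, Finset.image_id]

end mapFlemmas

/-- number of `U`-flags compatible with `f` only depends on the type of `f`. -/
lemma d_const (hf : IsFlag n f) (hft : flagType f = T)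
    (hf' : IsFlag n f') (hft' : flagType f' = T) (U : Finset ℕ) :
    (((Iv n).powerset.powerset).filter
        (fun h => IsFlag n h ∧ flagType h = U ∧ Compat f h)).card
      = (((Iv n).powerset.powerset).filter
        (fun h => IsFlag n h ∧ flagType h = U ∧ Compat f' h)).card := by
  obtain ⟨σ, τ, hσI, hτI, hτσ, hστ, -, hmap⟩ := transport hf hft hf' hft'
  have hmem : ∀ (g : Finset (Finset ℕ)), IsFlag n g →
      g ∈ (Iv n).powerset.powerset := by
    intro g hg
    rw [Finset.mem_powerset]
    intro C hC
    rw [Finset.mem_powerset]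
    exact (hg.1 C hC).2.1
  have hmap' : mapF τ f' = f := by
    rw [← hmap, mapF_mapF hτσ (fun C hC => (hf.1 C hC).2.1)]
  apply Finset.card_bij' (fun h _ => mapF σ h) (fun h _ => mapF τ h)
  · -- forward membership
    intro h hh
    rw [Finset.mem_filter] at hh
    obtain ⟨-, hflag, htype, hcompat⟩ := hh
    have hflag2 := mapF_isFlag hσI hτσ hflag
    rw [Finset.mem_filter]
    refine ⟨hmem _ hflag2, hflag2, by rw [mapF_type hσI hτσ hflag, htype], ?_⟩
    intro A' hA' D' hD'
    obtain ⟨A, hA, rfl⟩ : ∃ A ∈ f, A.image σ = A' := by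
      rw [← hmap] at hA'
      obtain ⟨A, hA, hAe⟩ := Finset.mem_image.1 hA'
      exact ⟨A, hA, hAe⟩
    obtain ⟨D, hD, rfl⟩ := Finset.mem_image.1 hD'
    rcases hcompat A hA D hD with h' | h'
    · exact Or.inl (Finset.image_subset_image h')
    · exact Or.inr (Finset.image_subset_image h')
  · -- backward membership
    intro h hh
    rw [Finset.mem_filter] at hh
    obtain ⟨-, hflag, htype, hcompat⟩ := hh
    have hflag2 := mapF_isFlag hτI hστ hflag
    rw [Finset.mem_filter]
    refine ⟨hmem _ hflag2, hflag2, by rw [mapF_type hτI hστ hflag, htype], ?_⟩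
    intro A hA D' hD'
    obtain ⟨A', hA', rfl⟩ : ∃ A' ∈ f', A'.image τ = A := by
      rw [← hmap'] at hA
      obtain ⟨A', hA', hAe⟩ := Finset.mem_image.1 hA
      exact ⟨A', hA', hAe⟩
    obtain ⟨D, hD, rfl⟩ := Finset.mem_image.1 hD'
    rcases hcompat A' hA' D hD with h' | h'
    · exact Or.inl (Finset.image_subset_image h')
    · exact Or.inr (Finset.image_subset_image h')
  · intro h hh
    rw [Finset.mem_filter] at hh
    exact mapF_mapF hτσ (fun C hC => (hh.2.1.1 C hC).2.1)
  · intro h hh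
    rw [Finset.mem_filter] at hh
    exact mapF_mapF hστ (fun C hC => (hh.2.1.1 C hC).2.1)


/-- inserting a set of a new cardinality into a flag. -/
lemma insert_step (hf : IsFlag n f) {s : ℕ} (hs : s ∉ flagType f)
    (hs1 : 1 ≤ s) (hs2 : s ≤ n - 1) :
    ∃ C, IsFlag n (insert C f) ∧ flagType (insert C f) = insert s (flagType f) := by
  have hn2 : 2 ≤ n := by omega
  -- lower bound A₀
  obtain ⟨A₀, hA₀sub, hA₀card, hA₀max⟩ :
      ∃ A₀, A₀ ⊆ Iv n ∧ A₀.card ≤ s ∧ (∀ A ∈ f, A.card < s → A ⊆ A₀) ∧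
        (A₀ = ∅ ∨ A₀ ∈ f) := by
    by_cases hne : (f.filter (fun A => A.card < s)).Nonempty
    · obtain ⟨M, hM, hMmax⟩ := Finset.exists_max_image _ Finset.card hne
      rw [Finset.mem_filter] at hM
      refine ⟨M, (hf.1 M hM.1).2.1, by omega, fun A hA hAc => ?_, Or.inr hM.1⟩
      have hle := hMmax A (Finset.mem_filter.2 ⟨hA, hAc⟩)
      exact (flag_subset_iff hf hA hM.1).2 hle
    · refine ⟨∅, by simp, by simp, fun A hA hAc => ?_, Or.inl rfl⟩
      exact absurd ⟨A, Finset.mem_filter.2 ⟨hA, hAc⟩⟩ hne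
  obtain ⟨hA₀max, hA₀mem⟩ := hA₀max
  -- upper bound B₀
  obtain ⟨B₀, hB₀sub, hB₀card, hB₀min⟩ :
      ∃ B₀, B₀ ⊆ Iv n ∧ s ≤ B₀.card ∧ (∀ A ∈ f, s < A.card → B₀ ⊆ A) ∧
        (B₀ = Iv n ∨ B₀ ∈ f) := by
    by_cases hne : (f.filter (fun A => s < A.card)).Nonempty
    · obtain ⟨M, hM, hMmin⟩ := Finset.exists_min_image _ Finset.card hne
      rw [Finset.mem_filter] at hM
      refine ⟨M, (hf.1 M hM.1).2.1, by omega, fun A hA hAc => ?_, Or.inr hM.1⟩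
      have hle := hMmin A (Finset.mem_filter.2 ⟨hA, hAc⟩)
      exact (flag_subset_iff hf hM.1 hA).2 hle
    · refine ⟨Iv n, Finset.Subset.refl _, by rw [card_Iv]; omega, fun A hA hAc => ?_,
        Or.inl rfl⟩
      exact absurd ⟨A, Finset.mem_filter.2 ⟨hA, hAc⟩⟩ hne
  obtain ⟨hB₀min, hB₀mem⟩ := hB₀min
  -- A₀ ⊆ B₀
  have hAB : A₀ ⊆ B₀ := by
    rcases hA₀mem with rfl | hA₀f
    · simp
    rcases hB₀mem with rfl | hB₀f
    · exact hA₀sub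
    have hcards : A₀.card < s := by
      by_contra hcon
      have : A₀.card = s := by omega
      rw [← this] at hs
      exact hs (Finset.mem_image_of_mem _ hA₀f)
    have hcards' : s < B₀.card := by
      by_contra hcon
      have : B₀.card = s := by omega
      rw [← this] at hs
      exact hs (Finset.mem_image_of_mem _ hB₀f)
    exact (flag_subset_iff hf hA₀f hB₀f).2 (by omega)
  obtain ⟨C, hCA, hCB, hCcard⟩ := Finset.exists_subsuperset_card_eq hAB hA₀card hB₀card
  have hCIv : C ⊆ Iv n := hCB.trans hB₀sub
  have hCchain : ∀ A ∈ f, A ⊆ C ∨ C ⊆ A := by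
    intro A hA
    rcases Nat.lt_trichotomy A.card s with hlt | heq | hgt
    · exact Or.inl ((hA₀max A hA hlt).trans hCA)
    · exact absurd (heq ▸ Finset.mem_image_of_mem _ hA) hs
    · exact Or.inr (hCB.trans (hB₀min A hA hgt))
  refine ⟨C, ⟨?_, ?_⟩, ?_⟩
  · intro D hD
    rcases Finset.mem_insert.1 hD with rfl | hDf
    · refine ⟨Finset.card_pos.1 (by omega), hCIv, fun hcon => ?_⟩
      rw [hcon, card_Iv] at hCcard
      omega
    · exact hf.1 D hDf
  · intro D hD D' hD'
    rcases Finset.mem_insert.1 hD with rfl | hDf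
    · rcases Finset.mem_insert.1 hD' with rfl | hD'f
      · exact Or.inl (Finset.Subset.refl _)
      · exact (hCchain D' hD'f).symm
    · rcases Finset.mem_insert.1 hD' with rfl | hD'f
      · exact hCchain D hDf
      · exact hf.2 D hDf D' hD'f
  · rw [flagType, Finset.image_insert, hCcard]
    rfl

/-- extend a flag to a larger type. -/
lemma ext_flag (k : ℕ) : ∀ (f R : Finset _), R ⊆ Iv (n - 1) → IsFlag n f →
    flagType f ⊆ R → (R \ flagType f).card = k →
    ∃ g, IsFlag n g ∧ flagType g = R ∧ f ⊆ g := by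
  induction k with
  | zero =>
    intro f R hR hf hsub hcard
    have : R = flagType f := by
      apply Finset.Subset.antisymm _ hsub
      intro t ht
      by_contra hcon
      have : t ∈ R \ flagType f := Finset.mem_sdiff.2 ⟨ht, hcon⟩
      rw [Finset.card_eq_zero.1 hcard] at this
      simp at this
    exact ⟨f, hf, this.symm, Finset.Subset.refl _⟩
  | succ k ih =>
    intro f R hR hf hsub hcard
    have hne : (R \ flagType f).Nonempty := by
      rw [← Finset.card_pos, hcard]; omega
    obtain ⟨s, hs⟩ := hne
    rw [Finset.mem_sdiff] at hs
    have hsIv := hR hs.1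
    rw [mem_Iv] at hsIv
    obtain ⟨C, hCflag, hCtype⟩ := insert_step hf hs.2 hsIv.1 hsIv.2
    have h1 : flagType (insert C f) ⊆ R := by
      rw [hCtype]
      intro t ht
      rcases Finset.mem_insert.1 ht with rfl | ht'
      · exact hs.1
      · exact hsub ht'
    have h2 : (R \ flagType (insert C f)).card = k := by
      rw [hCtype]
      have : R \ insert s (flagType f) = (R \ flagType f).erase s := by
        ext t
        simp only [Finset.mem_sdiff, Finset.mem_erase, Finset.mem_insert]
        tauto
      rw [this, Finset.card_erase_of_mem (Finset.mem_sdiff.2 hs), hcard]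
      omega
    obtain ⟨g, hg1, hg2, hg3⟩ := ih (insert C f) R hR hCflag h1 h2
    exact ⟨g, hg1, hg2, (Finset.subset_insert _ _).trans hg3⟩

lemma cmpl_isFlag (hn : 1 ≤ n) (hh : IsFlag n h) : IsFlag n (cmpl n h) := by
  constructor
  · intro D hD
    obtain ⟨C, hC, rfl⟩ := Finset.mem_image.1 hD
    obtain ⟨hne, hsub, hneq⟩ := hh.1 C hC
    have hcard : (Iv n \ C).card = n - C.card := by
      rw [Finset.card_sdiff_of_subset hsub, card_Iv]
    have hclt := flag_card_lt hh hC
    refine ⟨?_, Finset.sdiff_subset, ?_⟩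
    · rw [← Finset.card_pos, hcard]; omega
    · intro hcon
      rw [hcon, card_Iv] at hcard
      have := flag_card_pos hh hC
      omega
  · intro D hD D' hD'
    obtain ⟨C, hC, rfl⟩ := Finset.mem_image.1 hD
    obtain ⟨C', hC', rfl⟩ := Finset.mem_image.1 hD'
    rcases hh.2 C hC C' hC' with h' | h'
    · exact Or.inr (Finset.sdiff_subset_sdiff (Finset.Subset.refl _) h')
    · exact Or.inl (Finset.sdiff_subset_sdiff (Finset.Subset.refl _) h')

lemma cmpl_type (hh : IsFlag n h) :
    flagType (cmpl n h) = (flagType h).image (fun t => n - t) := by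
  unfold flagType cmpl
  rw [Finset.image_image, Finset.image_image]
  apply Finset.image_congr
  intro C hC
  simp only [Function.comp]
  rw [Finset.card_sdiff_of_subset (hh.1 C hC).2.1, card_Iv]

lemma cmpl_cmpl (hh : ∀ C ∈ h, C ⊆ Iv n) : cmpl n (cmpl n h) = h := by
  unfold cmpl
  rw [Finset.image_image]
  have key : ∀ C ∈ h, (Iv n \ (Iv n \ C)) = C := by
    intro C hC
    rw [Finset.sdiff_sdiff_self_left]
    exact Finset.inter_eq_right.2 (hh C hC)
  have : h.image ((fun A => Iv n \ A) ∘ (fun A => Iv n \ A)) = h.image id := by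
    apply Finset.image_congr
    intro C hC
    simp only [Function.comp, id]
    exact key C hC
  rw [this, Finset.image_id]

lemma genpos_cmpl (hf : IsFlag n f) (hcompat : Compat f h) :
    GenPos n f (cmpl n h) := by
  intro A hA D hD
  obtain ⟨C, hC, rfl⟩ := Finset.mem_image.1 hD
  rcases hcompat A hA C hC with h' | h'
  · left
    apply Finset.eq_empty_of_forall_notMem
    intro x hx
    rw [Finset.mem_inter, Finset.mem_sdiff] at hx
    exact hx.2.2 (h' hx.1)
  · right
    apply Finset.Subset.antisymm
    · intro x hx
      rcases Finset.mem_union.1 hx with hx' | hx'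
      · exact (hf.1 A hA).2.1 hx'
      · exact (Finset.mem_sdiff.1 hx').1
    · intro x hx
      rw [Finset.mem_union, Finset.mem_sdiff]
      by_cases hxC : x ∈ C
      · exact Or.inl (h' hxC)
      · exact Or.inr ⟨hx, hxC⟩

/-- key non-equality: `f ≠ cmpl n h` when `i+j=n`, `i j ∈ T`. -/
lemma ne_cmpl {i j : ℕ} (hi : i ∈ T) (hj : j ∈ T) (hij : i + j = n)
    (hT : T ⊆ Iv (n-1))
    (hf : IsFlag n f) (hft : flagType f = T)
    (hh : IsFlag n h) (hht : flagType h = T.image (fun t => n - t))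
    (hcompat : Compat f h) : f ≠ cmpl n h := by
  intro heq
  have hiIv := hT hi
  have hjIv := hT hj
  rw [mem_Iv] at hiIv hjIv
  -- D ∈ h with card n - i = j
  have hnijU : n - i ∈ T.image (fun t => n - t) := Finset.mem_image_of_mem _ hi
  obtain ⟨D, hD, hDc⟩ := exists_card_mem hht hnijU
  -- B ∈ f with card j
  obtain ⟨B, hB, hBc⟩ := exists_card_mem hft hj
  -- B = D since compatible with equal cards
  have hBD : B = D := by
    have hcc : B.card = D.card := by rw [hBc, hDc]; omega
    rcases hcompat B hB D hD with h' | h'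
    · exact Finset.eq_of_subset_of_card_le h' hcc.ge
    · exact (Finset.eq_of_subset_of_card_le h' hcc.le).symm
  -- Iv n \ D ∈ f
  have hmem : Iv n \ D ∈ f := by
    rw [heq]
    exact Finset.mem_image_of_mem _ hD
  subst hBD
  -- chain on B and Iv n \ B
  have hBne : B.Nonempty := (hf.1 B hB).1
  have hBIv : B ⊆ Iv n := (hf.1 B hB).2.1
  have hcompl_ne : (Iv n \ B).Nonempty := by
    rw [← Finset.card_pos, Finset.card_sdiff_of_subset hBIv, card_Iv]
    omega
  rcases hf.2 B hB (Iv n \ B) hmem with h' | h'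
  · obtain ⟨x, hx⟩ := hBne
    have := h' hx
    rw [Finset.mem_sdiff] at this
    exact this.2 hx
  · obtain ⟨x, hx⟩ := hcompl_ne
    have hx2 := h' hx
    rw [Finset.mem_sdiff] at hx
    exact hx.2 hx2


lemma pair_count {α β : Type*} [DecidableEq α] [DecidableEq β]
    (V : Finset α) (Uu : Finset β) (R : α → β → Prop) [∀ a b, Decidable (R a b)]
    (X : Finset α) (hX : X ⊆ V) :
    (((V ×ˢ Uu).filter (fun z => R z.1 z.2)).filter (fun z => z.1 ∈ X)).card
      = ∑ f ∈ X, (Uu.filter (fun h => R f h)).card := by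
  rw [Finset.card_eq_sum_card_fiberwise (f := Prod.fst) (t := X)
    (s := ((V ×ˢ Uu).filter (fun z => R z.1 z.2)).filter (fun z => z.1 ∈ X))
    (fun z hz => (Finset.mem_filter.1 hz).2)]
  apply Finset.sum_congr rfl
  intro f hf
  refine Finset.card_bij' (fun z (_ : z ∈ _) => z.2) (fun b (_ : b ∈ _) => (f, b))
    ?hi ?hj ?left ?right
  case hi =>
    rintro ⟨a, b⟩ hz
    simp only [Finset.mem_filter, Finset.mem_product] at hz ⊢
    obtain ⟨⟨⟨⟨-, h2⟩, h3⟩, -⟩, h5⟩ := hz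
    subst h5
    exact ⟨h2, h3⟩
  case hj =>
    intro b hb
    simp only [Finset.mem_filter] at hb
    have hfV : f ∈ V := hX hf
    simp only [Finset.mem_filter, Finset.mem_product]
    tauto
  case left =>
    rintro ⟨a, b⟩ hz
    simp only [Finset.mem_filter] at hz
    obtain ⟨-, h5⟩ := hz
    subst h5
    rfl
  case right =>
    intro b hb
    rfl

theorem two_ncard_le (hn : 2 ≤ n) (hTsub : T ⊆ Iv (n-1))
    {i j : ℕ} (hi : i ∈ T) (hj : j ∈ T) (hij : i + j = n)
    (S : Set (FlagV n T)) (hS : IsIndep (flagGraph n T) S) :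
    2 * S.ncard ≤ Nat.card (FlagV n T) := by
  classical
  have hmemPP : ∀ (g : Finset (Finset ℕ)), IsFlag n g →
      g ∈ (Iv n).powerset.powerset := by
    intro g hg
    rw [Finset.mem_powerset]
    intro C hC
    rw [Finset.mem_powerset]
    exact (hg.1 C hC).2.1
  let PP : Finset (Finset (Finset ℕ)) := (Iv n).powerset.powerset
  let 𝒱 : Finset (Finset (Finset ℕ)) :=
    PP.filter (fun f => IsFlag n f ∧ flagType f = T)
  let U : Finset ℕ := T.image (fun t => n - t)
  let 𝒰 : Finset (Finset (Finset ℕ)) :=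
    PP.filter (fun h => IsFlag n h ∧ flagType h = U)
  have hmem𝒱 : ∀ f, f ∈ 𝒱 ↔ IsFlag n f ∧ flagType f = T := by
    intro f
    simp only [𝒱, Finset.mem_filter]
    exact ⟨fun h => h.2, fun h => ⟨hmemPP f h.1, h⟩⟩
  have hmem𝒰 : ∀ h, h ∈ 𝒰 ↔ IsFlag n h ∧ flagType h = U := by
    intro h
    simp only [𝒰, Finset.mem_filter]
    exact ⟨fun h => h.2, fun h' => ⟨hmemPP h h'.1, h'⟩⟩
  have hUsub : U ⊆ Iv (n - 1) := by
    intro u hu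
    obtain ⟨t, ht, rfl⟩ := Finset.mem_image.1 hu
    have := hTsub ht
    rw [mem_Iv] at this ⊢
    omega
  have hUinv : U.image (fun t => n - t) = T := by
    show (T.image (fun t => n - t)).image (fun t => n - t) = T
    rw [Finset.image_image]
    have : T.image ((fun t => n - t) ∘ (fun t => n - t)) = T.image id := by
      apply Finset.image_congr
      intro t ht
      have h1 := (mem_Iv.1 (hTsub ht)).1
      have h2 := (mem_Iv.1 (hTsub ht)).2
      simp only [Function.comp, id]
      omega
    rw [this, Finset.image_id]
  -- d
  let d : Finset (Finset ℕ) → ℕ := fun f => (𝒰.filter (fun h => Compat f h)).card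
  have hd_eq : ∀ f, d f = (PP.filter
      (fun h => IsFlag n h ∧ flagType h = U ∧ Compat f h)).card := by
    intro f
    show (𝒰.filter (fun h => Compat f h)).card = _
    rw [show 𝒰 = PP.filter (fun h => IsFlag n h ∧ flagType h = U) from rfl,
      Finset.filter_filter]
    congr 1
    apply Finset.filter_congr
    intro h _
    tauto
  have hdconst : ∀ f ∈ 𝒱, ∀ f' ∈ 𝒱, d f = d f' := by
    intro f hf f' hf'
    rw [hmem𝒱] at hf hf'
    rw [hd_eq, hd_eq]
    exact d_const hf.1 hf.2 hf'.1 hf'.2 U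
  have hdpos : ∀ f ∈ 𝒱, 0 < d f := by
    intro f hf
    rw [hmem𝒱] at hf
    obtain ⟨hflag, htype⟩ := hf
    have hTR : T ∪ U ⊆ Iv (n - 1) := Finset.union_subset hTsub hUsub
    obtain ⟨g, hg1, hg2, hg3⟩ := ext_flag ((T ∪ U) \ flagType f).card f (T ∪ U) hTR hflag
      (htype ▸ Finset.subset_union_left) rfl
    have hhflag : IsFlag n (g.filter (fun A => A.card ∈ U)) := by
      constructor
      · intro A hA
        exact hg1.1 A (Finset.mem_filter.1 hA).1
      · intro A hA B hB
        exact hg1.2 A (Finset.mem_filter.1 hA).1 B (Finset.mem_filter.1 hB).1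
    have hhtype : flagType (g.filter (fun A => A.card ∈ U)) = U := by
      apply Finset.Subset.antisymm
      · intro u hu
        obtain ⟨A, hA, rfl⟩ := Finset.mem_image.1 hu
        exact (Finset.mem_filter.1 hA).2
      · intro u hu
        have : u ∈ flagType g := hg2 ▸ Finset.mem_union_right _ hu
        obtain ⟨A, hA, rfl⟩ := Finset.mem_image.1 this
        exact Finset.mem_image_of_mem _ (Finset.mem_filter.2 ⟨hA, hu⟩)
    have hcompat : Compat f (g.filter (fun A => A.card ∈ U)) := by
      intro A hA D hD
      exact hg1.2 A (hg3 hA) D (Finset.mem_filter.1 hD).1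
    apply Finset.card_pos.2
    exact ⟨g.filter (fun A => A.card ∈ U), Finset.mem_filter.2
      ⟨(hmem𝒰 _).2 ⟨hhflag, hhtype⟩, hcompat⟩⟩
  -- vertex count
  have hVcard : Nat.card (FlagV n T) = 𝒱.card := by
    have h1 : Nat.card (FlagV n T)
        = Set.ncard {f : Finset (Finset ℕ) | IsFlag n f ∧ flagType f = T} :=
      Nat.card_coe_set_eq _
    have h2 : {f : Finset (Finset ℕ) | IsFlag n f ∧ flagType f = T} = (𝒱 : Set _) := by
      ext f
      simp only [Set.mem_setOf_eq, Finset.mem_coe]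
      exact (hmem𝒱 f).symm
    rw [h1, h2, Set.ncard_coe_finset]
  -- S as a finset
  haveI : Finite (FlagV n T) := by
    refine Finite.of_injective
      (fun v : FlagV n T => (⟨v.1, hmemPP v.1 v.2.1⟩ : {x // x ∈ PP})) ?_
    intro v w hvw
    have h2 := congrArg (Subtype.val (p := fun x => x ∈ PP)) hvw
    exact Subtype.ext h2
  have hSfin : S.Finite := Set.toFinite S
  let Sf : Finset (Finset (Finset ℕ)) := hSfin.toFinset.image (fun v => v.1)
  have hSfcard : S.ncard = Sf.card := by
    have h1 : Sf.card = hSfin.toFinset.card :=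
      Finset.card_image_of_injOn (fun v _ w _ hvw => Subtype.ext hvw)
    rw [h1, Set.ncard_eq_toFinset_card _ hSfin]
  have hmemSf : ∀ x, x ∈ Sf ↔ ∃ v ∈ S, (v : FlagV n T).1 = x := by
    intro x
    simp only [Sf, Finset.mem_image, Set.Finite.mem_toFinset]
  have hSfV : Sf ⊆ 𝒱 := by
    intro x hx
    obtain ⟨v, -, rfl⟩ := (hmemSf x).1 hx
    exact (hmem𝒱 _).2 v.2
  -- the pair set
  let 𝒲 : Finset (Finset (Finset ℕ) × Finset (Finset ℕ)) :=
    (𝒱 ×ˢ 𝒰).filter (fun z => Compat z.1 z.2)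
  have hmem𝒲 : ∀ z, z ∈ 𝒲 ↔ z.1 ∈ 𝒱 ∧ z.2 ∈ 𝒰 ∧ Compat z.1 z.2 := by
    intro z
    simp only [𝒲, Finset.mem_filter, Finset.mem_product]
    tauto
  have hWcard : 𝒲.card = ∑ f ∈ 𝒱, d f := by
    have h0 : 𝒲.filter (fun z => z.1 ∈ 𝒱) = 𝒲 := by
      apply Finset.filter_true_of_mem
      intro z hz
      exact ((hmem𝒲 z).1 hz).1
    rw [← h0]
    exact pair_count 𝒱 𝒰 Compat 𝒱 (Finset.Subset.refl _)
  have hShatcard : (𝒲.filter (fun z => z.1 ∈ Sf)).card = ∑ f ∈ Sf, d f :=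
    pair_count 𝒱 𝒰 Compat Sf hSfV
  let Shat := 𝒲.filter (fun z => z.1 ∈ Sf)
  have hmemShat : ∀ z, z ∈ Shat ↔ z ∈ 𝒲 ∧ z.1 ∈ Sf := fun z => Finset.mem_filter
  -- the involution
  let κ : Finset (Finset ℕ) × Finset (Finset ℕ) → _ :=
    (fun z => (cmpl n z.2, cmpl n z.1))
  have hmemW : ∀ z ∈ Shat, κ z ∈ 𝒲 := by
    rintro ⟨f, h⟩ hz
    obtain ⟨hzW, hfS⟩ := (hmemShat _).1 hz
    obtain ⟨hfV, hhU, hcompat⟩ := (hmem𝒲 _).1 hzW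
    obtain ⟨hfflag, hftype⟩ := (hmem𝒱 _).1 hfV
    obtain ⟨hhflag, hhtype⟩ := (hmem𝒰 _).1 hhU
    have hc1 : IsFlag n (cmpl n h) := cmpl_isFlag (by omega) hhflag
    have hc2 : flagType (cmpl n h) = T := by
      rw [cmpl_type hhflag, hhtype, hUinv]
    have hc3 : IsFlag n (cmpl n f) := cmpl_isFlag (by omega) hfflag
    have hc4 : flagType (cmpl n f) = U := by
      rw [cmpl_type hfflag, hftype]
    have hc5 : Compat (cmpl n h) (cmpl n f) := by
      intro D' hD' A' hA'
      obtain ⟨D, hD, rfl⟩ := Finset.mem_image.1 hD'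
      obtain ⟨A, hA, rfl⟩ := Finset.mem_image.1 hA'
      rcases hcompat A hA D hD with h' | h'
      · exact Or.inl (Finset.sdiff_subset_sdiff (Finset.Subset.refl _) h')
      · exact Or.inr (Finset.sdiff_subset_sdiff (Finset.Subset.refl _) h')
    exact (hmem𝒲 _).2 ⟨(hmem𝒱 _).2 ⟨hc1, hc2⟩, (hmem𝒰 _).2 ⟨hc3, hc4⟩, hc5⟩
  have hnotin : ∀ z ∈ Shat, κ z ∉ Shat := by
    rintro ⟨f, h⟩ hz hzin
    obtain ⟨hzW, hfS⟩ := (hmemShat _).1 hz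
    obtain ⟨hfV, hhU, hcompat⟩ := (hmem𝒲 _).1 hzW
    obtain ⟨hfflag, hftype⟩ := (hmem𝒱 _).1 hfV
    obtain ⟨hhflag, hhtype⟩ := (hmem𝒰 _).1 hhU
    obtain ⟨-, hchS⟩ := (hmemShat _).1 hzin
    obtain ⟨v, hvS, hv1⟩ := (hmemSf f).1 hfS
    obtain ⟨w, hwS, hw1⟩ := (hmemSf (cmpl n h)).1 hchS
    have hne : f ≠ cmpl n h :=
      ne_cmpl hi hj hij hTsub hfflag hftype hhflag hhtype hcompat
    have hadj : (flagGraph n T).Adj v w := by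
      show v ≠ w ∧ GenPos n v.1 w.1
      constructor
      · intro hcon
        rw [hcon] at hv1
        rw [hv1] at hw1
        exact hne (hw1 ▸ rfl)
      · rw [hv1, hw1]
        exact genpos_cmpl hfflag hcompat
    exact hS hvS hwS hadj
  have hκinj : Set.InjOn κ Shat := by
    rintro ⟨f, h⟩ hz ⟨f', h'⟩ hz' heq
    rw [Finset.mem_coe] at hz hz'
    obtain ⟨hzW, -⟩ := (hmemShat _).1 hz
    obtain ⟨hzW', -⟩ := (hmemShat _).1 hz'
    obtain ⟨hfV, hhU, -⟩ := (hmem𝒲 _).1 hzW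
    obtain ⟨hfV', hhU', -⟩ := (hmem𝒲 _).1 hzW'
    simp only [κ, Prod.mk.injEq] at heq
    have s1 : ∀ C ∈ h, C ⊆ Iv n := fun C hC => ((((hmem𝒰 h).1 hhU).1).1 C hC).2.1
    have s2 : ∀ C ∈ h', C ⊆ Iv n := fun C hC => ((((hmem𝒰 h').1 hhU').1).1 C hC).2.1
    have s3 : ∀ C ∈ f, C ⊆ Iv n := fun C hC => ((((hmem𝒱 f).1 hfV).1).1 C hC).2.1
    have s4 : ∀ C ∈ f', C ⊆ Iv n := fun C hC => ((((hmem𝒱 f').1 hfV').1).1 C hC).2.1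
    have e1 : h = h' := by
      rw [← cmpl_cmpl s1, ← cmpl_cmpl s2, heq.1]
    have e2 : f = f' := by
      rw [← cmpl_cmpl s3, ← cmpl_cmpl s4, heq.2]
    rw [Prod.mk.injEq]
    exact ⟨e2, e1⟩
  have hKcard : (Shat.image κ).card = Shat.card :=
    Finset.card_image_of_injOn hκinj
  have hdisj : Disjoint Shat (Shat.image κ) := by
    rw [Finset.disjoint_right]
    intro z hz
    obtain ⟨w, hw, rfl⟩ := Finset.mem_image.1 hz
    exact hnotin w hw
  have hsubW : Shat ∪ Shat.image κ ⊆ 𝒲 := by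
    apply Finset.union_subset (Finset.filter_subset _ _)
    intro z hz
    obtain ⟨w, hw, rfl⟩ := Finset.mem_image.1 hz
    exact hmemW w hw
  have hineq : Shat.card + Shat.card ≤ 𝒲.card := by
    calc Shat.card + Shat.card = Shat.card + (Shat.image κ).card := by rw [hKcard]
    _ = (Shat ∪ Shat.image κ).card := (Finset.card_union_of_disjoint hdisj).symm
    _ ≤ 𝒲.card := Finset.card_le_card hsubW
  -- conclude
  rcases Finset.eq_empty_or_nonempty Sf with hSfe | ⟨f₀, hf₀⟩
  · have : S = ∅ := by
      by_contra hcon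
      obtain ⟨v, hv⟩ := Set.nonempty_iff_ne_empty.2 hcon
      have : v.1 ∈ Sf := (hmemSf v.1).2 ⟨v, hv, rfl⟩
      rw [hSfe] at this
      simp at this
    rw [this]
    simp
  have hf₀V := hSfV hf₀
  have hsum1 : ∑ f ∈ Sf, d f = Sf.card * d f₀ := by
    rw [Finset.sum_congr rfl (fun f hf => hdconst f (hSfV hf) f₀ hf₀V),
      Finset.sum_const, smul_eq_mul]
  have hsum2 : ∑ f ∈ 𝒱, d f = 𝒱.card * d f₀ := by
    rw [Finset.sum_congr rfl (fun f hf => hdconst f hf f₀ hf₀V),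
      Finset.sum_const, smul_eq_mul]
  have hd₀ : 0 < d f₀ := hdpos f₀ hf₀V
  rw [hVcard, hSfcard]
  have hkey : Sf.card * d f₀ + Sf.card * d f₀ ≤ 𝒱.card * d f₀ := by
    rw [← hsum1, ← hsum2, ← hShatcard]
    exact hWcard ▸ hineq
  have h2 : (2 * Sf.card) * d f₀ ≤ 𝒱.card * d f₀ := by
    rw [two_mul, add_mul]
    exact hkey
  exact Nat.le_of_mul_le_mul_right h2 hd₀


/-- adjacency forces complementary pairs. -/
lemma genpos_pair (hf : IsFlag n f) (hBIv : B ⊆ Iv n) (hGP : GenPos n f g)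
    (hA : A ∈ f) (hB : B ∈ g) (hcard : A.card + B.card = n) : B = Iv n \ A := by
  have hAIv : A ⊆ Iv n := (hf.1 A hA).2.1
  have key : A ∩ B = ∅ ∧ A ∪ B = Iv n := by
    rcases hGP A hA B hB with h' | h'
    · refine ⟨h', ?_⟩
      apply Finset.eq_of_subset_of_card_le
      · exact Finset.union_subset hAIv hBIv
      · have := Finset.card_union_add_card_inter A B
        rw [h'] at this
        simp at this
        rw [card_Iv]
        omega
    · refine ⟨?_, h'⟩
      have := Finset.card_union_add_card_inter A B
      rw [h', card_Iv] at this
      have h0 : (A ∩ B).card = 0 := by omega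
      exact Finset.card_eq_zero.1 h0
  obtain ⟨h1, h2⟩ := key
  rw [← h2]
  rw [Finset.union_sdiff_cancel_left]
  rwa [Finset.disjoint_iff_inter_eq_empty]


end BQ

open BQ in
/-- if `i + j = n` with `i, j ∈ T`, then `Γ(n,T)` is bipartite and its
independence number is half the number of its vertices. -/
theorem bipartite_flagGraph (n : ℕ) (hn : 2 ≤ n) (T : Finset ℕ)
    (hT : T.Nonempty) (hTsub : T ⊆ Iv (n - 1))
    (i j : ℕ) (hi : i ∈ T) (hj : j ∈ T) (hij : i + j = n) :
    (flagGraph n T).Colorable 2 ∧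
    2 * indepNum (flagGraph n T) = Nat.card (FlagV n T) := by
  classical
  -- unique members of cardinality t
  have hexu : ∀ (v : FlagV n T) (t : ℕ), t ∈ T →
      ∃! A, A ∈ v.1 ∧ A.card = t := by
    intro v t ht
    obtain ⟨A, hA, hAc⟩ := exists_card_mem v.2.2 ht
    refine ⟨A, ⟨hA, hAc⟩, ?_⟩
    rintro B ⟨hB, hBc⟩
    exact flag_eq_of_card v.2.1 hB hA (by omega)
  let pA : FlagV n T → Finset ℕ := fun v => (hexu v i hi).choose
  let pB : FlagV n T → Finset ℕ := fun v => (hexu v j hj).choose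
  have hpA : ∀ v, pA v ∈ v.1 ∧ (pA v).card = i := fun v => (hexu v i hi).choose_spec.1
  have hpB : ∀ v, pB v ∈ v.1 ∧ (pB v).card = j := fun v => (hexu v j hj).choose_spec.1
  have hpA_eq : ∀ (v : FlagV n T) (A : Finset ℕ), A ∈ v.1 → A.card = i → A = pA v :=
    fun v A hA hAc => (hexu v i hi).choose_spec.2 A ⟨hA, hAc⟩
  have hpB_eq : ∀ (v : FlagV n T) (B : Finset ℕ), B ∈ v.1 → B.card = j → B = pB v :=
    fun v B hB hBc => (hexu v j hj).choose_spec.2 B ⟨hB, hBc⟩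
  -- pair map under adjacency
  have hadj_pair : ∀ v w : FlagV n T, (flagGraph n T).Adj v w →
      pA w = Iv n \ pB v ∧ pB w = Iv n \ pA v := by
    intro v w hvw
    obtain ⟨hne, hGP⟩ : v ≠ w ∧ GenPos n v.1 w.1 := hvw
    constructor
    · exact genpos_pair v.2.1 (w.2.1.1 _ (hpA w).1).2.1 hGP (hpB v).1 (hpA w).1
        (by rw [(hpB v).2, (hpA w).2]; omega)
    · exact genpos_pair v.2.1 (w.2.1.1 _ (hpB w).1).2.1 hGP (hpA v).1 (hpB w).1
        (by rw [(hpA v).2, (hpB w).2]; omega)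
  -- non-fixedness
  have hnefix : ∀ v : FlagV n T, pA v ≠ Iv n \ pB v := by
    intro v hcon
    have hAmem := (hpA v).1
    have hBmem := (hpB v).1
    have hAne : (pA v).Nonempty := (v.2.1.1 _ hAmem).1
    have hBne : (pB v).Nonempty := (v.2.1.1 _ hBmem).1
    rcases v.2.1.2 _ hAmem _ hBmem with h' | h'
    · obtain ⟨x, hx⟩ := hAne
      have h1 := h' hx
      rw [hcon, Finset.mem_sdiff] at hx
      exact hx.2 h1
    · obtain ⟨x, hx⟩ := hBne
      have h1 := h' hx
      rw [hcon, Finset.mem_sdiff] at h1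
      exact h1.2 hx
  -- the coloring
  let enc : Finset ℕ × Finset ℕ → ℕ := Encodable.encode
  have henc : Function.Injective enc := Encodable.encode_injective
  let c : FlagV n T → Bool :=
    fun v => decide (enc (pA v, pB v) < enc (Iv n \ pB v, Iv n \ pA v))
  have hvalid : ∀ {v w : FlagV n T}, (flagGraph n T).Adj v w → c v ≠ c w := by
    intro v w hvw
    obtain ⟨h1, h2⟩ := hadj_pair v w hvw
    obtain ⟨h3, h4⟩ := hadj_pair w v ((flagGraph n T).adj_symm hvw)
    have hpair_ne : (pA v, pB v) ≠ (pA w, pB w) := by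
      intro hcon
      rw [Prod.mk.injEq] at hcon
      apply hnefix v
      rw [h3, hcon.2]
    have hab : enc (pA v, pB v) ≠ enc (pA w, pB w) := fun hcon => hpair_ne (henc hcon)
    have e1 : c v = decide (enc (pA v, pB v) < enc (pA w, pB w)) := by
      show decide (enc (pA v, pB v) < enc (Iv n \ pB v, Iv n \ pA v)) = _
      rw [show (Iv n \ pB v, Iv n \ pA v) = (pA w, pB w) by rw [h1, h2]]
    have e2 : c w = decide (enc (pA w, pB w) < enc (pA v, pB v)) := by
      show decide (enc (pA w, pB w) < enc (Iv n \ pB w, Iv n \ pA w)) = _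
      rw [show (Iv n \ pB w, Iv n \ pA w) = (pA v, pB v) by rw [h3, h4]]
    intro hc
    rw [e1, e2] at hc
    rcases Nat.lt_trichotomy (enc (pA v, pB v)) (enc (pA w, pB w)) with hlt | heq | hgt
    · simp [hlt, Nat.lt_asymm hlt] at hc
    · exact hab heq
    · simp [hgt, Nat.lt_asymm hgt] at hc
  let C : (flagGraph n T).Coloring Bool := SimpleGraph.Coloring.mk c (fun hvw => hvalid hvw)
  have hcolor : (flagGraph n T).Colorable 2 := by
    have := C.colorable
    rwa [Fintype.card_bool] at this
  refine ⟨hcolor, ?_⟩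
  -- finiteness
  haveI : Finite (FlagV n T) := by
    refine Finite.of_injective
      (fun v : FlagV n T => (⟨v.1, ?_⟩ : {x // x ∈ (Iv n).powerset.powerset})) ?_
    · rw [Finset.mem_powerset]
      intro C' hC'
      rw [Finset.mem_powerset]
      exact (v.2.1.1 C' hC').2.1
    · intro v w hvw
      have h2 := congrArg (Subtype.val (p := fun x => x ∈ (Iv n).powerset.powerset)) hvw
      exact Subtype.ext h2
  have hbdd : BddAbove {k | ∃ s : Set (FlagV n T), IsIndep (flagGraph n T) s ∧ s.ncard = k} := by
    refine ⟨Nat.card (FlagV n T), ?_⟩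
    rintro k ⟨s, -, rfl⟩
    have := Set.ncard_le_ncard (Set.subset_univ s) Set.finite_univ
    rwa [Set.ncard_univ] at this
  have hne : {k | ∃ s : Set (FlagV n T), IsIndep (flagGraph n T) s ∧ s.ncard = k}.Nonempty := by
    refine ⟨0, ∅, ?_, Set.ncard_empty _⟩
    intro u hu
    simp at hu
  have hsup := Nat.sSup_mem hne hbdd
  obtain ⟨S₀, hS₀, hS₀card⟩ := hsup
  have le1 : 2 * indepNum (flagGraph n T) ≤ Nat.card (FlagV n T) := by
    rw [show indepNum (flagGraph n T) = S₀.ncard from hS₀card.symm]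
    exact two_ncard_le hn hTsub hi hj hij S₀ hS₀
  -- lower bound via color classes
  have hindep_t : IsIndep (flagGraph n T) {v | c v = true} := by
    intro u hu v hv hadj
    exact hvalid hadj (by rw [Set.mem_setOf_eq] at hu hv; rw [hu, hv])
  have hindep_f : IsIndep (flagGraph n T) {v | c v = true}ᶜ := by
    intro u hu v hv hadj
    apply hvalid hadj
    simp only [Set.mem_compl_iff, Set.mem_setOf_eq, Bool.not_eq_true] at hu hv
    rw [hu, hv]
  have h1 : {v | c v = true}.ncard ≤ indepNum (flagGraph n T) :=
    le_csSup hbdd ⟨_, hindep_t, rfl⟩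
  have h2 : ({v | c v = true}ᶜ : Set (FlagV n T)).ncard ≤ indepNum (flagGraph n T) :=
    le_csSup hbdd ⟨_, hindep_f, rfl⟩
  have hsum : {v | c v = true}.ncard + ({v | c v = true}ᶜ : Set (FlagV n T)).ncard
      = Nat.card (FlagV n T) := Set.ncard_add_ncard_compl _
  omega
end

section
/- Let n > 1 be an integer and T a nonempty subset of [n−1] with t := max(T) ≤ n/2. Then α(Γ(n,T)) = C(n−1, t−1) · |VΓ(t, T∖{t})|, where C(·,·) denotes the binomial coefficient. -/
open Finset

section Aux
open scoped Classical

lemma flagV_finite (n : ℕ) (T : Finset ℕ) : Finite (FlagV n T) := by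
  have hmem : ∀ f : FlagV n T, f.1 ∈ (Iv n).powerset.powerset := by
    intro f
    rw [Finset.mem_powerset]
    intro A hA
    rw [Finset.mem_powerset]
    exact (f.2.1.1 A hA).2.1
  refine Finite.of_injective
    (fun f : FlagV n T => (⟨f.1, hmem f⟩ : {x // x ∈ (Iv n).powerset.powerset})) ?_
  intro a b h
  have h2 : a.1 = b.1 := congrArg (fun x : {x // x ∈ (Iv n).powerset.powerset} => x.val) h
  exact Subtype.ext h2

noncomputable instance instFlagVFintype (n : ℕ) (T : Finset ℕ) : Fintype (FlagV n T) :=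
  @Fintype.ofFinite _ (flagV_finite n T)

/-- The top member of a flag. -/
def topF {n : ℕ} {T : Finset ℕ} (f : FlagV n T) : Finset ℕ := f.1.sup id

lemma card_mem_T {n : ℕ} {T : Finset ℕ} (f : FlagV n T) {A : Finset ℕ} (hA : A ∈ f.1) :
    A.card ∈ T := by
  rw [← f.2.2]; exact Finset.mem_image_of_mem _ hA

lemma card_Iv (n : ℕ) : (Iv n).card = n := by simp [Iv]

lemma topF_spec {n t : ℕ} {T : Finset ℕ} (htT : t ∈ T) (hmax : ∀ j ∈ T, j ≤ t)
    (f : FlagV n T) :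
    topF f ∈ f.1 ∧ (topF f).card = t ∧ ∀ A ∈ f.1, A ⊆ topF f := by
  have hmemT : t ∈ flagType f.1 := by rw [f.2.2]; exact htT
  obtain ⟨M, hM, hMc⟩ := Finset.mem_image.1 hmemT
  have hsub : ∀ A ∈ f.1, A ⊆ M := by
    intro A hA
    rcases f.2.1.2 A hA M hM with h | h
    · exact h
    · have h1 : A.card ≤ t := hmax _ (card_mem_T f hA)
      have h2 : M = A := Finset.eq_of_subset_of_card_le h (by omega)
      rw [← h2]
  have htop : topF f = M :=
    le_antisymm (Finset.sup_le fun A hA => hsub A hA) (Finset.le_sup (f := id) hM)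
  exact ⟨htop ▸ hM, htop ▸ hMc, fun A hA => htop ▸ hsub A hA⟩

lemma genPos_iff {n t : ℕ} {T : Finset ℕ} (htT : t ∈ T) (hmax : ∀ j ∈ T, j ≤ t)
    (h2t : 2 * t ≤ n) (f g : FlagV n T) :
    GenPos n f.1 g.1 ↔ topF f ∩ topF g = ∅ := by
  obtain ⟨hfm, hfc, hfs⟩ := topF_spec htT hmax f
  obtain ⟨hgm, hgc, hgs⟩ := topF_spec htT hmax g
  constructor
  · intro hgp
    rcases hgp (topF f) hfm (topF g) hgm with h | h
    · exact h
    · have hcardu : (topF f ∪ topF g).card = n := by rw [h, card_Iv]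
      have := Finset.card_union_add_card_inter (topF f) (topF g)
      rw [hcardu, hfc, hgc] at this
      rw [← Finset.card_eq_zero]
      omega
  · intro hdis A hA B hB
    left
    rw [← Finset.subset_empty, ← hdis]
    exact Finset.inter_subset_inter (hfs A hA) (hgs B hB)

end Aux
section Maps
open scoped Classical

/-- Monotone bijection `[t] → S`. -/
def sigmaMap (S : Finset ℕ) (t : ℕ) (hS : S.card = t) : ℕ → ℕ :=
  fun x => if h : 1 ≤ x ∧ x ≤ t then (S.orderIsoOfFin hS ⟨x - 1, by omega⟩ : ℕ) else 0

/-- Inverse bijection `S → [t]`. -/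
def tauMap (S : Finset ℕ) (t : ℕ) (hS : S.card = t) : ℕ → ℕ :=
  fun y => if h : y ∈ S then (((S.orderIsoOfFin hS).symm ⟨y, h⟩ : Fin t) : ℕ) + 1 else 0

lemma sigmaMap_mem {S : Finset ℕ} {t : ℕ} (hS : S.card = t) {x : ℕ} (hx : x ∈ Iv t) :
    sigmaMap S t hS x ∈ S := by
  rw [Iv, Finset.mem_Icc] at hx
  simp only [sigmaMap, dif_pos hx]
  exact (S.orderIsoOfFin hS ⟨x - 1, by omega⟩).2

lemma tauMap_mem {S : Finset ℕ} {t : ℕ} (hS : S.card = t) {y : ℕ} (hy : y ∈ S) :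
    tauMap S t hS y ∈ Iv t := by
  have hlt : (((S.orderIsoOfFin hS).symm ⟨y, hy⟩ : Fin t) : ℕ) < t :=
    ((S.orderIsoOfFin hS).symm ⟨y, hy⟩).isLt
  simp only [tauMap, dif_pos hy]
  rw [Iv, Finset.mem_Icc]
  omega

lemma tau_sigma {S : Finset ℕ} {t : ℕ} (hS : S.card = t) {x : ℕ} (hx : x ∈ Iv t) :
    tauMap S t hS (sigmaMap S t hS x) = x := by
  rw [Iv, Finset.mem_Icc] at hx
  have hx' : 1 ≤ x ∧ x ≤ t := hx
  have hval : sigmaMap S t hS x = (S.orderIsoOfFin hS ⟨x - 1, by omega⟩ : ℕ) := by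
    simp only [sigmaMap, dif_pos hx']
  have hmem : sigmaMap S t hS x ∈ S := by
    rw [hval]; exact (S.orderIsoOfFin hS ⟨x - 1, by omega⟩).2
  simp only [tauMap, dif_pos hmem]
  have heq : (⟨sigmaMap S t hS x, hmem⟩ : {a // a ∈ S}) =
      S.orderIsoOfFin hS ⟨x - 1, by omega⟩ := Subtype.ext hval
  rw [heq, OrderIso.symm_apply_apply]
  show x - 1 + 1 = x
  omega

lemma sigma_tau {S : Finset ℕ} {t : ℕ} (hS : S.card = t) {y : ℕ} (hy : y ∈ S) :
    sigmaMap S t hS (tauMap S t hS y) = y := by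
  have hval : tauMap S t hS y = (((S.orderIsoOfFin hS).symm ⟨y, hy⟩ : Fin t) : ℕ) + 1 := by
    simp only [tauMap, dif_pos hy]
  have hlt : (((S.orderIsoOfFin hS).symm ⟨y, hy⟩ : Fin t) : ℕ) < t :=
    ((S.orderIsoOfFin hS).symm ⟨y, hy⟩).isLt
  have hcond : 1 ≤ tauMap S t hS y ∧ tauMap S t hS y ≤ t := by omega
  simp only [sigmaMap, dif_pos hcond]
  have heq : (⟨tauMap S t hS y - 1, by omega⟩ : Fin t) = (S.orderIsoOfFin hS).symm ⟨y, hy⟩ := by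
    apply Fin.ext
    show tauMap S t hS y - 1 = _
    omega
  rw [heq, OrderIso.apply_symm_apply]

/-- Round trip of images under mutually inverse maps. -/
lemma image_image_id {α β : Type*} [DecidableEq α] [DecidableEq β] {σ : α → β} {τ : β → α}
    {D : Finset α} (h : ∀ x ∈ D, τ (σ x) = x)
    {A : Finset α} (hA : A ⊆ D) : (A.image σ).image τ = A := by
  rw [Finset.image_image]
  rw [show A.image (τ ∘ σ) = A.image id from Finset.image_congr fun x hx => h x (hA hx)]
  exact Finset.image_id

lemma card_image_inv {α β : Type*} [DecidableEq α] [DecidableEq β] {σ : α → β} {τ : β → α}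
    {D : Finset α} (h : ∀ x ∈ D, τ (σ x) = x)
    {A : Finset α} (hA : A ⊆ D) : (A.image σ).card = A.card := by
  refine le_antisymm Finset.card_image_le ?_
  calc A.card = ((A.image σ).image τ).card := by rw [image_image_id h hA]
    _ ≤ (A.image σ).card := Finset.card_image_le

end Maps
section Fiber
open scoped Classical

lemma mapFlag_roundtrip {σ τ : ℕ → ℕ} {D : Finset ℕ} (h : ∀ x ∈ D, τ (σ x) = x)
    {F : Finset (Finset ℕ)} (hF : ∀ A ∈ F, A ⊆ D) :
    (F.image (Finset.image σ)).image (Finset.image τ) = F := by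
  rw [Finset.image_image]
  rw [show F.image (Finset.image τ ∘ Finset.image σ) = F.image id from
    Finset.image_congr fun A hA => image_image_id h (hF A hA)]
  exact Finset.image_id

variable {n t : ℕ} {T : Finset ℕ} {S : Finset ℕ}

lemma fwd_mem (htT : t ∈ T) (hmax : ∀ j ∈ T, j ≤ t) (hT1 : ∀ j ∈ T, 1 ≤ j)
    (hScard : S.card = t) (f : FlagV n T) (hf : topF f = S) :
    IsFlag t ((f.1.erase S).image (Finset.image (tauMap S t hScard))) ∧
    flagType ((f.1.erase S).image (Finset.image (tauMap S t hScard))) = T.erase t := by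
  obtain ⟨htm, htc, hts⟩ := topF_spec htT hmax f
  rw [hf] at htm hts
  have hAS : ∀ A ∈ f.1.erase S, A ⊆ S ∧ A.card < t ∧ A.card ∈ T ∧ A.Nonempty := by
    intro A hA
    obtain ⟨hne, hAf⟩ := Finset.mem_erase.1 hA
    have hsub : A ⊆ S := hts A hAf
    have hlt : A.card < S.card := Finset.card_lt_card ⟨hsub, fun h => hne (le_antisymm hsub h)⟩
    exact ⟨hsub, hScard ▸ hlt, card_mem_T f hAf, (f.2.1.1 A hAf).1⟩
  have hrt : ∀ y ∈ S, sigmaMap S t hScard (tauMap S t hScard y) = y :=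
    fun y hy => sigma_tau hScard hy
  have hcard : ∀ A ∈ f.1.erase S, (A.image (tauMap S t hScard)).card = A.card :=
    fun A hA => card_image_inv hrt (hAS A hA).1
  refine ⟨⟨?_, ?_⟩, ?_⟩
  · intro B hB
    obtain ⟨A, hA, rfl⟩ := Finset.mem_image.1 hB
    obtain ⟨hsub, hlt, _, hne⟩ := hAS A hA
    refine ⟨hne.image _, ?_, ?_⟩
    · intro y hy
      obtain ⟨x, hx, rfl⟩ := Finset.mem_image.1 hy
      exact tauMap_mem hScard (hsub hx)
    · intro hEq
      have := congrArg Finset.card hEq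
      rw [hcard A hA, card_Iv] at this
      omega
  · intro B1 h1 B2 h2
    obtain ⟨A1, hA1, rfl⟩ := Finset.mem_image.1 h1
    obtain ⟨A2, hA2, rfl⟩ := Finset.mem_image.1 h2
    rcases f.2.1.2 A1 (Finset.mem_of_mem_erase hA1) A2 (Finset.mem_of_mem_erase hA2) with h | h
    · exact Or.inl (Finset.image_subset_image h)
    · exact Or.inr (Finset.image_subset_image h)
  · rw [flagType, Finset.image_image]
    rw [show (f.1.erase S).image (Finset.card ∘ Finset.image (tauMap S t hScard)) =
        (f.1.erase S).image Finset.card from Finset.image_congr fun A hA => hcard A hA]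
    ext j
    rw [Finset.mem_image, Finset.mem_erase]
    constructor
    · rintro ⟨A, hA, rfl⟩
      exact ⟨(hAS A hA).2.1.ne, (hAS A hA).2.2.1⟩
    · rintro ⟨hjne, hjT⟩
      have : j ∈ flagType f.1 := by rw [f.2.2]; exact hjT
      obtain ⟨A, hAf, hAc⟩ := Finset.mem_image.1 this
      refine ⟨A, Finset.mem_erase.2 ⟨?_, hAf⟩, hAc⟩
      intro hEq
      apply hjne
      rw [← hAc, hEq, hScard]

lemma bwd_mem (htT : t ∈ T) (hmax : ∀ j ∈ T, j ≤ t) (hT1 : ∀ j ∈ T, 1 ≤ j)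
    (htn : t < n) (hSsub : S ⊆ Iv n) (hScard : S.card = t)
    (g : FlagV t (T.erase t)) :
    IsFlag n (insert S (g.1.image (Finset.image (sigmaMap S t hScard)))) ∧
    flagType (insert S (g.1.image (Finset.image (sigmaMap S t hScard)))) = T ∧
    (insert S (g.1.image (Finset.image (sigmaMap S t hScard)))).sup id = S ∧
    S ∉ g.1.image (Finset.image (sigmaMap S t hScard)) := by
  have hrt : ∀ x ∈ Iv t, tauMap S t hScard (sigmaMap S t hScard x) = x :=
    fun x hx => tau_sigma hScard hx
  have hgA : ∀ A ∈ g.1, A ⊆ Iv t ∧ A.Nonempty ∧ A.card < t ∧ A.card ∈ T := by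
    intro A hA
    have hcT : A.card ∈ T.erase t := by rw [← g.2.2]; exact Finset.mem_image_of_mem _ hA
    obtain ⟨hcne, hcT'⟩ := Finset.mem_erase.1 hcT
    have := hmax _ hcT'
    exact ⟨(g.2.1.1 A hA).2.1, (g.2.1.1 A hA).1, by omega, hcT'⟩
  have hcard : ∀ A ∈ g.1, (A.image (sigmaMap S t hScard)).card = A.card :=
    fun A hA => card_image_inv hrt (hgA A hA).1
  have hBS : ∀ B ∈ g.1.image (Finset.image (sigmaMap S t hScard)), B ⊆ S ∧ B.card < t := by
    intro B hB
    obtain ⟨A, hA, rfl⟩ := Finset.mem_image.1 hB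
    constructor
    · intro y hy
      obtain ⟨x, hx, rfl⟩ := Finset.mem_image.1 hy
      exact sigmaMap_mem hScard ((hgA A hA).1 hx)
    · rw [hcard A hA]; exact (hgA A hA).2.2.1
  have hSne : S ∉ g.1.image (Finset.image (sigmaMap S t hScard)) := by
    intro hS
    have := (hBS S hS).2
    omega
  have ht1 : 1 ≤ t := hT1 t htT
  have hSIv : S ≠ Iv n := by
    intro hEq
    have := congrArg Finset.card hEq
    rw [hScard, card_Iv] at this
    omega
  refine ⟨⟨?_, ?_⟩, ?_, ?_, hSne⟩
  · intro B hB
    rcases Finset.mem_insert.1 hB with rfl | hB'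
    · exact ⟨Finset.card_pos.1 (by omega), hSsub, hSIv⟩
    · obtain ⟨hsub, hlt⟩ := hBS B hB'
      obtain ⟨A, hA, rfl⟩ := Finset.mem_image.1 hB'
      refine ⟨(hgA A hA).2.1.image _, hsub.trans hSsub, ?_⟩
      intro hEq
      have := congrArg Finset.card hEq
      rw [card_Iv] at this
      rw [this] at hlt
      omega
  · intro B1 h1 B2 h2
    rcases Finset.mem_insert.1 h1 with rfl | h1'
    · rcases Finset.mem_insert.1 h2 with rfl | h2'
      · exact Or.inl (Finset.Subset.refl _)
      · exact Or.inr (hBS B2 h2').1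
    · rcases Finset.mem_insert.1 h2 with rfl | h2'
      · exact Or.inl (hBS B1 h1').1
      · obtain ⟨A1, hA1, rfl⟩ := Finset.mem_image.1 h1'
        obtain ⟨A2, hA2, rfl⟩ := Finset.mem_image.1 h2'
        rcases g.2.1.2 A1 hA1 A2 hA2 with h | h
        · exact Or.inl (Finset.image_subset_image h)
        · exact Or.inr (Finset.image_subset_image h)
  · rw [flagType, Finset.image_insert, hScard, Finset.image_image]
    rw [show g.1.image (Finset.card ∘ Finset.image (sigmaMap S t hScard)) =
        g.1.image Finset.card from Finset.image_congr fun A hA => hcard A hA]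
    rw [show g.1.image Finset.card = T.erase t from g.2.2]
    exact Finset.insert_erase htT
  · refine le_antisymm (Finset.sup_le ?_) (Finset.le_sup (f := id) (Finset.mem_insert_self S _))
    intro B hB
    rcases Finset.mem_insert.1 hB with rfl | hB'
    · exact le_refl _
    · exact (hBS B hB').1

lemma fiber_card (htT : t ∈ T) (hmax : ∀ j ∈ T, j ≤ t) (hT1 : ∀ j ∈ T, 1 ≤ j)
    (htn : t < n) (hSsub : S ⊆ Iv n) (hScard : S.card = t) :
    (Finset.univ.filter fun f : FlagV n T => topF f = S).card =
      Nat.card (FlagV t (T.erase t)) := by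
  rw [Nat.card_eq_fintype_card, ← Finset.card_univ]
  refine Finset.card_bij'
    (i := fun f hf => (⟨(f.1.erase S).image (Finset.image (tauMap S t hScard)),
      fwd_mem htT hmax hT1 hScard f (Finset.mem_filter.1 hf).2⟩ : FlagV t (T.erase t)))
    (j := fun g _ => (⟨insert S (g.1.image (Finset.image (sigmaMap S t hScard))),
      (bwd_mem htT hmax hT1 htn hSsub hScard g).1,
      (bwd_mem htT hmax hT1 htn hSsub hScard g).2.1⟩ : FlagV n T))
    (fun f hf => Finset.mem_univ _) (fun g hg => ?_) (fun f hf => ?_) (fun g hg => ?_)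
  · refine Finset.mem_filter.2 ?_
    exact ⟨Finset.mem_univ _, (bwd_mem htT hmax hT1 htn hSsub hScard g).2.2.1⟩
  · -- left inverse
    have hf' : topF f = S := (Finset.mem_filter.1 hf).2
    obtain ⟨htm, htc, hts⟩ := topF_spec htT hmax f
    rw [hf'] at htm hts
    apply Subtype.ext
    show insert S (((f.1.erase S).image (Finset.image (tauMap S t hScard))).image
      (Finset.image (sigmaMap S t hScard))) = f.1
    rw [mapFlag_roundtrip (fun y hy => sigma_tau hScard hy)
      (fun A hA => hts A (Finset.mem_of_mem_erase hA))]
    exact Finset.insert_erase htm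
  · -- right inverse
    apply Subtype.ext
    show ((insert S (g.1.image (Finset.image (sigmaMap S t hScard)))).erase S).image
      (Finset.image (tauMap S t hScard)) = g.1
    rw [Finset.erase_insert (bwd_mem htT hmax hT1 htn hSsub hScard g).2.2.2]
    exact mapFlag_roundtrip (fun x hx => tau_sigma hScard hx) (fun A hA => (g.2.1.1 A hA).2.1)

end Fiber
section EKR
open scoped Classical

lemma ekr_nat {n t : ℕ} (hn : 0 < n) (h2t : 2 * t ≤ n) (𝒜 : Finset (Finset ℕ))
    (hsub : ∀ S ∈ 𝒜, S ⊆ Iv n) (hsize : ∀ S ∈ 𝒜, S.card = t)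
    (hint : ∀ S ∈ 𝒜, ∀ S' ∈ 𝒜, (S ∩ S').Nonempty) :
    𝒜.card ≤ (n - 1).choose (t - 1) := by
  set emb : ℕ → Fin n := fun x => if h : x - 1 < n then ⟨x - 1, h⟩ else ⟨0, hn⟩ with hemb
  set emb' : Fin n → ℕ := fun i => (i : ℕ) + 1 with hemb'
  have hrt : ∀ x ∈ Iv n, emb' (emb x) = x := by
    intro x hx
    rw [Iv, Finset.mem_Icc] at hx
    have h1 : x - 1 < n := by omega
    simp only [hemb, hemb', dif_pos h1]
    omega
  set 𝒜' := 𝒜.image (Finset.image emb) with h𝒜'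
  have hcard : 𝒜'.card = 𝒜.card := by
    apply Finset.card_image_of_injOn
    intro S1 hS1 S2 hS2 hEq
    have := congrArg (Finset.image emb') hEq
    rwa [image_image_id hrt (hsub S1 hS1), image_image_id hrt (hsub S2 hS2)] at this
  have hsized : (𝒜' : Set (Finset (Fin n))).Sized t := by
    intro A hA
    obtain ⟨S, hS, rfl⟩ := Finset.mem_image.1 hA
    rw [card_image_inv hrt (hsub S hS)]
    exact hsize S hS
  have hinter : (𝒜' : Set (Finset (Fin n))).Intersecting := by
    intro A hA B hB
    obtain ⟨S, hS, rfl⟩ := Finset.mem_image.1 hA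
    obtain ⟨S', hS', rfl⟩ := Finset.mem_image.1 hB
    obtain ⟨x, hx⟩ := hint S hS S' hS'
    rw [Finset.mem_inter] at hx
    rw [Finset.disjoint_left]
    intro hd
    exact hd (Finset.mem_image_of_mem emb hx.1) (Finset.mem_image_of_mem emb hx.2)
  have h3 : t ≤ n / 2 := (Nat.le_div_iff_mul_le (by norm_num)).2 (by omega)
  calc 𝒜.card = 𝒜'.card := hcard.symm
    _ ≤ (n - 1).choose (t - 1) := Finset.erdos_ko_rado hinter hsized h3

lemma card_contains_one {n t : ℕ} (hn : 1 ≤ n) (ht1 : 1 ≤ t) :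
    (((Iv n).powersetCard t).filter (fun S => 1 ∈ S)).card = (n - 1).choose (t - 1) := by
  have h1 : ((Finset.Icc 2 n).powersetCard (t - 1)).card = (n - 1).choose (t - 1) := by
    rw [Finset.card_powersetCard, Nat.card_Icc]
    congr 1
  rw [← h1]
  refine Finset.card_bij' (i := fun S _ => S.erase 1) (j := fun R _ => insert 1 R)
    ?_ ?_ ?_ ?_
  · intro S hS
    rw [Finset.mem_filter, Finset.mem_powersetCard] at hS
    obtain ⟨⟨hsub, hcard⟩, h1S⟩ := hS
    rw [Finset.mem_powersetCard]
    constructor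
    · intro x hx
      obtain ⟨hne, hxS⟩ := Finset.mem_erase.1 hx
      have := hsub hxS
      rw [Iv, Finset.mem_Icc] at this
      rw [Finset.mem_Icc]
      omega
    · rw [Finset.card_erase_of_mem h1S, hcard]
  · intro R hR
    rw [Finset.mem_powersetCard] at hR
    obtain ⟨hsub, hcard⟩ := hR
    have h1R : 1 ∉ R := by
      intro h
      have := hsub h
      rw [Finset.mem_Icc] at this
      omega
    rw [Finset.mem_filter, Finset.mem_powersetCard]
    refine ⟨⟨?_, ?_⟩, Finset.mem_insert_self 1 R⟩
    · intro x hx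
      rcases Finset.mem_insert.1 hx with rfl | hx'
      · rw [Iv, Finset.mem_Icc]; omega
      · have := hsub hx'
        rw [Finset.mem_Icc] at this
        rw [Iv, Finset.mem_Icc]
        omega
    · rw [Finset.card_insert_of_notMem h1R, hcard]
      omega
  · intro S hS
    rw [Finset.mem_filter] at hS
    exact Finset.insert_erase hS.2
  · intro R hR
    rw [Finset.mem_powersetCard] at hR
    have h1R : 1 ∉ R := by
      intro h
      have := hR.1 h
      rw [Finset.mem_Icc] at this
      omega
    exact Finset.erase_insert h1R

end EKR

/-- for nonempty `T ⊆ [n-1]` with `t := max T ≤ n/2`,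
`α(Γ(n,T)) = C(n-1, t-1) · |VΓ(t, T∖{t})|`. -/
theorem indepNum_small_max (n : ℕ) (hn : 1 < n) (T : Finset ℕ) (hT : T.Nonempty)
    (hTsub : T ⊆ Iv (n - 1)) (t : ℕ) (ht : t = T.max' hT) (htn : 2 * t ≤ n) :
    indepNum (flagGraph n T) =
      Nat.choose (n - 1) (t - 1) * Nat.card (FlagV t (T.erase t)) := by
  classical
  have htT : t ∈ T := by rw [ht]; exact T.max'_mem hT
  have hmax : ∀ j ∈ T, j ≤ t := by intro j hj; rw [ht]; exact T.le_max' j hj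
  have hT1 : ∀ j ∈ T, 1 ≤ j := by
    intro j hj
    have := hTsub hj
    rw [Iv, Finset.mem_Icc] at this
    omega
  have ht1 : 1 ≤ t := hT1 t htT
  have htln : t < n := by
    have := hTsub htT
    rw [Iv, Finset.mem_Icc] at this
    omega
  set N := Nat.card (FlagV t (T.erase t)) with hN
  set K := (n - 1).choose (t - 1) with hK
  have hub : ∀ k ∈ {k | ∃ s : Set (FlagV n T), IsIndep (flagGraph n T) s ∧ s.ncard = k},
      k ≤ K * N := by
    rintro k ⟨s, hs, rfl⟩
    rw [Set.ncard_eq_toFinset_card' s]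
    set F := s.toFinset with hF
    set tops := F.image topF with htops
    have hmemtops : ∀ S ∈ tops, S ⊆ Iv n ∧ S.card = t := by
      intro S hS
      obtain ⟨f, hf, rfl⟩ := Finset.mem_image.1 hS
      obtain ⟨hm, hc, _⟩ := topF_spec htT hmax f
      exact ⟨(f.2.1.1 _ hm).2.1, hc⟩
    have hterm : ∀ S ∈ tops, (F.filter (fun f => topF f = S)).card ≤ N := by
      intro S hS
      calc (F.filter (fun f => topF f = S)).card
          ≤ (Finset.univ.filter (fun f : FlagV n T => topF f = S)).card :=
            Finset.card_le_card (Finset.filter_subset_filter _ (Finset.subset_univ F))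
        _ = N := fiber_card htT hmax hT1 htln (hmemtops S hS).1 (hmemtops S hS).2
    have htopsK : tops.card ≤ K := by
      refine ekr_nat (by omega) htn tops (fun S hS => (hmemtops S hS).1)
        (fun S hS => (hmemtops S hS).2) ?_
      intro S hS S' hS'
      obtain ⟨f, hf, rfl⟩ := Finset.mem_image.1 hS
      obtain ⟨g, hg, rfl⟩ := Finset.mem_image.1 hS'
      by_cases hfg : f = g
      · subst hfg
        rw [Finset.inter_self, ← Finset.card_pos, (topF_spec htT hmax f).2.1]
        omega
      · have hfs : f ∈ s := by rwa [hF, Set.mem_toFinset] at hf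
        have hgs : g ∈ s := by rwa [hF, Set.mem_toFinset] at hg
        have hnadj := hs hfs hgs
        have hngp : ¬ GenPos n f.1 g.1 := fun hgp => hnadj ⟨hfg, hgp⟩
        rw [genPos_iff htT hmax htn] at hngp
        exact Finset.nonempty_iff_ne_empty.2 hngp
    calc F.card = ∑ S ∈ tops, (F.filter (fun f => topF f = S)).card :=
        Finset.card_eq_sum_card_fiberwise (fun f hf => Finset.mem_image_of_mem _ hf)
      _ ≤ ∑ _S ∈ tops, N := Finset.sum_le_sum hterm
      _ = tops.card * N := by rw [Finset.sum_const, smul_eq_mul]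
      _ ≤ K * N := Nat.mul_le_mul_right N htopsK
  have hlow : ∃ s : Set (FlagV n T), IsIndep (flagGraph n T) s ∧ s.ncard = K * N := by
    refine ⟨{f | 1 ∈ topF f}, ?_, ?_⟩
    · intro u hu v hv hadj
      have hgp := hadj.2
      rw [genPos_iff htT hmax htn] at hgp
      have h1 : (1 : ℕ) ∈ topF u ∩ topF v := Finset.mem_inter.2 ⟨hu, hv⟩
      rw [hgp] at h1
      exact absurd h1 (Finset.notMem_empty 1)
    · rw [Set.ncard_eq_toFinset_card']
      have hset : ({f | 1 ∈ topF f} : Set (FlagV n T)).toFinset =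
          Finset.univ.filter (fun f => 1 ∈ topF f) := by
        ext f; simp [Set.mem_toFinset]
      rw [hset]
      set 𝒜₀ := ((Iv n).powersetCard t).filter (fun S => 1 ∈ S) with h𝒜₀
      have hmap : ∀ f ∈ Finset.univ.filter (fun f : FlagV n T => 1 ∈ topF f),
          topF f ∈ 𝒜₀ := by
        intro f hf
        obtain ⟨hm, hc, _⟩ := topF_spec htT hmax f
        rw [h𝒜₀, Finset.mem_filter, Finset.mem_powersetCard]
        exact ⟨⟨(f.2.1.1 _ hm).2.1, hc⟩, (Finset.mem_filter.1 hf).2⟩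
      rw [Finset.card_eq_sum_card_fiberwise hmap]
      have hterm : ∀ S ∈ 𝒜₀, ((Finset.univ.filter (fun f : FlagV n T => 1 ∈ topF f)).filter
          (fun f => topF f = S)).card = N := by
        intro S hS
        rw [h𝒜₀, Finset.mem_filter, Finset.mem_powersetCard] at hS
        have heq : (Finset.univ.filter (fun f : FlagV n T => 1 ∈ topF f)).filter
            (fun f => topF f = S) = Finset.univ.filter (fun f : FlagV n T => topF f = S) := by
          ext f
          simp only [Finset.mem_filter, Finset.mem_univ, true_and]
          constructor
          · rintro ⟨_, h⟩; exact h
          · intro h; exact ⟨by rw [h]; exact hS.2, h⟩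
        rw [heq]
        exact fiber_card htT hmax hT1 htln hS.1.1 hS.1.2
      rw [Finset.sum_congr rfl hterm, Finset.sum_const, smul_eq_mul]
      rw [show 𝒜₀.card = K from card_contains_one (by omega) ht1]
  obtain ⟨s₀, hs₀, hc₀⟩ := hlow
  have hmem : K * N ∈ {k | ∃ s : Set (FlagV n T), IsIndep (flagGraph n T) s ∧ s.ncard = k} :=
    ⟨s₀, hs₀, hc₀⟩
  rw [indepNum]
  exact le_antisymm (csSup_le ⟨K * N, hmem⟩ hub) (le_csSup ⟨K * N, fun k hk => hub k hk⟩ hmem)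
end
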